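/- Let V be a finite-dimensional real vector space and let φ : V → V be a linear endomorphism such that every root in ℂ of the characteristic polynomial of φ is a positive real number. Suppose that for some vector D ∈ V, some real number λ > 0 and some integer m ≥ 1 one has φ^m(D) = λ^m · D. Then φ(D) = λ · D. -/

import Mathlib

/-!
The real polynomial `q = ∑ Xⁱ λ^(m-1-i)`, for which `q · (X - λ) = X^m - λ^m`, is positive on
`(0, ∞)`, where all complex roots of the characteristic polynomial of `φ` lie; so the two are
coprime. By Bézout and Cayley–Hamilton `q(φ)` is injective, and it kills `(φ - λ) D` because
`φ^m D = λ^m D`.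
-/

open Polynomial Finset

theorem geom_sum₂_pos {R : Type*} [CommSemiring R] [PartialOrder R] [IsStrictOrderedRing R]
    {x y : R} (hx : 0 ≤ x) (hy : 0 < y) {n : ℕ} (hn : n ≠ 0) :
    0 < ∑ i ∈ range n, x ^ i * y ^ (n - 1 - i) :=
  sum_pos' (fun i _ ↦ by positivity)
    ⟨0, mem_range.mpr (Nat.pos_of_ne_zero hn), by simpa using pow_pos hy (n - 1)⟩

theorem Polynomial.isCoprime_of_forall_pos_eval_ne_zero {p q : ℝ[X]}
    (hp : ∀ z : ℂ, (p.map (algebraMap ℝ ℂ)).IsRoot z → ∃ r : ℝ, 0 < r ∧ z = r)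
    (hq : ∀ r : ℝ, 0 < r → q.eval r ≠ 0) : IsCoprime p q := by
  refine (isCoprime_iff_aeval_ne_zero_of_isAlgClosed ℝ ℂ p q).mpr fun z ↦
    or_iff_not_imp_left.mpr fun hz ↦ ?_
  obtain ⟨r, hr, rfl⟩ := hp z (by simpa [IsRoot, eval_map_algebraMap] using hz)
  rw [← Complex.coe_algebraMap, aeval_algebraMap_apply, coe_aeval_eq_eval]
  exact (map_ne_zero_iff _ (algebraMap ℝ ℂ).injective).mpr (hq r hr)

namespace Module.End

theorem ker_aeval_eq_bot_of_isCoprime_charpoly {R M : Type*} [CommRing R] [AddCommGroup M]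
    [Module R M] [Module.Free R M] [Module.Finite R M] {φ : Module.End R M} {q : R[X]}
    (hq : IsCoprime q φ.charpoly) : LinearMap.ker (aeval φ q) = ⊥ := by
  simpa [LinearMap.aeval_self_charpoly] using disjoint_ker_aeval_of_isCoprime φ hq

theorem apply_eq_smul_of_pow_apply_eq_pow_smul {R M : Type*} [CommRing R] [AddCommGroup M]
    [Module R M] {φ : Module.End R M} {c : R} {m : ℕ}
    (hker : LinearMap.ker (aeval φ (∑ i ∈ range m, X ^ i * C c ^ (m - 1 - i))) = ⊥) {v : M}
    (h : (φ ^ m) v = c ^ m • v) : φ v = c • v := by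
  set q : R[X] := ∑ i ∈ range m, X ^ i * C c ^ (m - 1 - i)
  have hfactor : aeval φ q * (φ - algebraMap R _ c) = φ ^ m - algebraMap R _ (c ^ m) := by
    simpa only [map_mul, map_sub, map_pow, aeval_X, aeval_C] using
      congr(aeval φ $(geom_sum₂_mul (X : R[X]) (C c) m))
  have hkill : aeval φ q ((φ - algebraMap R _ c) v) = 0 := by
    rw [← Module.End.mul_apply, hfactor, LinearMap.sub_apply, h, Module.algebraMap_end_apply,
      sub_self]
  rw [← LinearMap.mem_ker, hker, Submodule.mem_bot, LinearMap.sub_apply,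
    Module.algebraMap_end_apply, sub_eq_zero] at hkill
  exact hkill

end Module.End

/-- Lemma 2.4 ('lem_positive_notreplaced'), linear-algebra content:
if every complex root of the characteristic polynomial of `φ` is a positive real
number, and `φ^m D = λ^m • D` for some `λ > 0` and `m ≥ 1`, then `φ D = λ • D`. -/
theorem positive_eigenvalues_power_eigvec {V : Type*} [AddCommGroup V] [Module ℝ V]
    [FiniteDimensional ℝ V] (φ : V →ₗ[ℝ] V)
    (hroots : ∀ z : ℂ, ((LinearMap.charpoly φ).map (algebraMap ℝ ℂ)).IsRoot z →
      ∃ r : ℝ, 0 < r ∧ z = (r : ℂ))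
    (D : V) (lam : ℝ) (hlam : 0 < lam) (m : ℕ) (hm : 1 ≤ m)
    (h : (φ ^ m) D = lam ^ m • D) :
    φ D = lam • D := by
  have hq : ∀ r : ℝ, 0 < r → (∑ i ∈ range m, X ^ i * C lam ^ (m - 1 - i)).eval r ≠ 0 :=
    fun r hr ↦ by simpa [eval_finsetSum] using (geom_sum₂_pos hr.le hlam (by omega)).ne'
  have hcop := (isCoprime_of_forall_pos_eval_ne_zero hroots hq).symm
  exact Module.End.apply_eq_smul_of_pow_apply_eq_pow_smul
    (Module.End.ker_aeval_eq_bot_of_isCoprime_charpoly hcop) h
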